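/- Suppose ψ₁, ψ₂, φ₁, φ₂ : ℂ → ℂ are smooth functions satisfying the Dirac-type system ∂_z ψ₁ = p φ₁, ∂_z ψ₂ = p̄ φ₂, ∂_{z̄} φ₁ = −p̄ ψ₁, ∂_{z̄} φ₂ = −p ψ₂ for a smooth function p : ℂ → ℂ. Then the 1-forms dX^1 = ½(ψ̄₁ψ̄₂ − φ₁φ₂)dz + c.c., dX^2 = (i/2)(ψ̄₁ψ̄₂ + φ₁φ₂)dz + c.c., dX^3 = ½(φ₁ψ̄₂ + ψ̄₁φ₂)dz + c.c., dX^4 = (i/2)(ψ̄₁φ₂ − φ₁ψ̄₂)dz + c.c. are each closed (i.e. the mixed ∂_{z̄}∂_z derivatives agree), so the Weierstrass representation X : ℂ → ℝ⁴ is locally well defined. -/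

import Mathlib

open Complex

/-- Wirtinger derivative `∂_z f = ½(∂_x f − i ∂_y f)`. -/
noncomputable def wirtZ (f : ℂ → ℂ) (z : ℂ) : ℂ :=
  (fderiv ℝ f z 1 - Complex.I * fderiv ℝ f z Complex.I) / 2

/-- Wirtinger derivative `∂_{z̄} f = ½(∂_x f + i ∂_y f)`. -/
noncomputable def wirtZbar (f : ℂ → ℂ) (z : ℂ) : ℂ :=
  (fderiv ℝ f z 1 + Complex.I * fderiv ℝ f z Complex.I) / 2

lemma fderiv_conj_comp (f : ℂ → ℂ) (z : ℂ) (hf : DifferentiableAt ℝ f z) :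
    fderiv ℝ (fun w => (starRingEnd ℂ) (f w)) z =
      (Complex.conjCLE.toContinuousLinearMap).comp (fderiv ℝ f z) := by
  have h := (Complex.conjCLE.toContinuousLinearMap.hasFDerivAt (x := f z)).comp z hf.hasFDerivAt
  exact h.fderiv

lemma wirtZ_conj (f : ℂ → ℂ) (z : ℂ) (hf : DifferentiableAt ℝ f z) :
    wirtZ (fun w => (starRingEnd ℂ) (f w)) z = (starRingEnd ℂ) (wirtZbar f z) := by
  simp [wirtZ, wirtZbar, fderiv_conj_comp f z hf, map_add, map_mul, map_div₀,
    Complex.conj_I, map_ofNat]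
  try ring

lemma wirtZbar_conj (f : ℂ → ℂ) (z : ℂ) (hf : DifferentiableAt ℝ f z) :
    wirtZbar (fun w => (starRingEnd ℂ) (f w)) z = (starRingEnd ℂ) (wirtZ f z) := by
  simp [wirtZ, wirtZbar, fderiv_conj_comp f z hf, map_sub, map_mul, map_div₀,
    Complex.conj_I, map_ofNat]
  try ring

lemma wirtZbar_mul (f g : ℂ → ℂ) (z : ℂ) (hf : DifferentiableAt ℝ f z)
    (hg : DifferentiableAt ℝ g z) :
    wirtZbar (fun w => f w * g w) z = wirtZbar f z * g z + f z * wirtZbar g z := by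
  simp [wirtZbar, fderiv_fun_mul hf hg, smul_eq_mul]
  try ring

lemma wirtZbar_const_mul (c : ℂ) (f : ℂ → ℂ) (z : ℂ) (hf : DifferentiableAt ℝ f z) :
    wirtZbar (fun w => c * f w) z = c * wirtZbar f z := by
  simp [wirtZbar, fderiv_const_mul hf c]
  try ring

lemma wirtZbar_sub (f g : ℂ → ℂ) (z : ℂ) (hf : DifferentiableAt ℝ f z)
    (hg : DifferentiableAt ℝ g z) :
    wirtZbar (fun w => f w - g w) z = wirtZbar f z - wirtZbar g z := by
  simp [wirtZbar, fderiv_fun_sub hf hg]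
  try ring

lemma wirtZbar_add (f g : ℂ → ℂ) (z : ℂ) (hf : DifferentiableAt ℝ f z)
    (hg : DifferentiableAt ℝ g z) :
    wirtZbar (fun w => f w + g w) z = wirtZbar f z + wirtZbar g z := by
  simp [wirtZbar, fderiv_fun_add hf hg]
  try ring

/-- If the spinors `(ψ₁,ψ₂,φ₁,φ₂)` satisfy the Dirac-type system, then the four
Weierstrass 1-forms `dXⁱ = fᵢ dz + f̄ᵢ dz̄` are closed (the closedness condition for
`ω = f dz + f̄ dz̄` being `∂_{z̄} f = ∂_z f̄`), so the Weierstrass representation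
`X : ℂ → ℝ⁴` is locally well defined. -/
theorem stmt_15 (p ψ₁ ψ₂ φ₁ φ₂ : ℂ → ℂ)
    (hp : ContDiff ℝ (⊤ : ℕ∞) p) (hψ₁ : ContDiff ℝ (⊤ : ℕ∞) ψ₁) (hψ₂ : ContDiff ℝ (⊤ : ℕ∞) ψ₂)
    (hφ₁ : ContDiff ℝ (⊤ : ℕ∞) φ₁) (hφ₂ : ContDiff ℝ (⊤ : ℕ∞) φ₂)
    (hd1 : ∀ z, wirtZ ψ₁ z = p z * φ₁ z)
    (hd2 : ∀ z, wirtZ ψ₂ z = (starRingEnd ℂ) (p z) * φ₂ z)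
    (hd3 : ∀ z, wirtZbar φ₁ z = -(starRingEnd ℂ) (p z) * ψ₁ z)
    (hd4 : ∀ z, wirtZbar φ₂ z = -p z * ψ₂ z)
    (f₁ f₂ f₃ f₄ : ℂ → ℂ)
    (hf₁ : ∀ z, f₁ z = (1 / 2) *
      ((starRingEnd ℂ) (ψ₁ z) * (starRingEnd ℂ) (ψ₂ z) - φ₁ z * φ₂ z))
    (hf₂ : ∀ z, f₂ z = (Complex.I / 2) *
      ((starRingEnd ℂ) (ψ₁ z) * (starRingEnd ℂ) (ψ₂ z) + φ₁ z * φ₂ z))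
    (hf₃ : ∀ z, f₃ z = (1 / 2) *
      (φ₁ z * (starRingEnd ℂ) (ψ₂ z) + (starRingEnd ℂ) (ψ₁ z) * φ₂ z))
    (hf₄ : ∀ z, f₄ z = (Complex.I / 2) *
      ((starRingEnd ℂ) (ψ₁ z) * φ₂ z - φ₁ z * (starRingEnd ℂ) (ψ₂ z))) :
    ∀ z : ℂ,
      wirtZbar f₁ z = wirtZ (fun w => (starRingEnd ℂ) (f₁ w)) z ∧
      wirtZbar f₂ z = wirtZ (fun w => (starRingEnd ℂ) (f₂ w)) z ∧
      wirtZbar f₃ z = wirtZ (fun w => (starRingEnd ℂ) (f₃ w)) z ∧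
      wirtZbar f₄ z = wirtZ (fun w => (starRingEnd ℂ) (f₄ w)) z := by
  have dψ₁ : Differentiable ℝ ψ₁ := hψ₁.differentiable (by simp)
  have dψ₂ : Differentiable ℝ ψ₂ := hψ₂.differentiable (by simp)
  have dφ₁ : Differentiable ℝ φ₁ := hφ₁.differentiable (by simp)
  have dφ₂ : Differentiable ℝ φ₂ := hφ₂.differentiable (by simp)
  have dcψ₁ : Differentiable ℝ (fun w => (starRingEnd ℂ) (ψ₁ w)) :=
    Complex.conjCLE.differentiable.comp dψ₁
  have dcψ₂ : Differentiable ℝ (fun w => (starRingEnd ℂ) (ψ₂ w)) :=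
    Complex.conjCLE.differentiable.comp dψ₂
  have dA : Differentiable ℝ (fun w => (starRingEnd ℂ) (ψ₁ w) * (starRingEnd ℂ) (ψ₂ w)) :=
    dcψ₁.mul dcψ₂
  have dB : Differentiable ℝ (fun w => φ₁ w * φ₂ w) := dφ₁.mul dφ₂
  have dC : Differentiable ℝ (fun w => φ₁ w * (starRingEnd ℂ) (ψ₂ w)) := dφ₁.mul dcψ₂
  have dD : Differentiable ℝ (fun w => (starRingEnd ℂ) (ψ₁ w) * φ₂ w) := dcψ₁.mul dφ₂
  intro z
  have wA : wirtZbar (fun w => (starRingEnd ℂ) (ψ₁ w) * (starRingEnd ℂ) (ψ₂ w)) z =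
      (starRingEnd ℂ) (p z * φ₁ z) * (starRingEnd ℂ) (ψ₂ z) +
        (starRingEnd ℂ) (ψ₁ z) * (starRingEnd ℂ) ((starRingEnd ℂ) (p z) * φ₂ z) := by
    rw [wirtZbar_mul _ _ z (dcψ₁ z) (dcψ₂ z), wirtZbar_conj _ _ (dψ₁ z),
      wirtZbar_conj _ _ (dψ₂ z), hd1, hd2]
  have wB : wirtZbar (fun w => φ₁ w * φ₂ w) z =
      (-(starRingEnd ℂ) (p z) * ψ₁ z) * φ₂ z + φ₁ z * (-p z * ψ₂ z) := by
    rw [wirtZbar_mul _ _ z (dφ₁ z) (dφ₂ z), hd3, hd4]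
  have wC : wirtZbar (fun w => φ₁ w * (starRingEnd ℂ) (ψ₂ w)) z =
      (-(starRingEnd ℂ) (p z) * ψ₁ z) * (starRingEnd ℂ) (ψ₂ z) +
        φ₁ z * (starRingEnd ℂ) ((starRingEnd ℂ) (p z) * φ₂ z) := by
    rw [wirtZbar_mul _ _ z (dφ₁ z) (dcψ₂ z), wirtZbar_conj _ _ (dψ₂ z), hd2, hd3]
  have wD : wirtZbar (fun w => (starRingEnd ℂ) (ψ₁ w) * φ₂ w) z =
      (starRingEnd ℂ) (p z * φ₁ z) * φ₂ z + (starRingEnd ℂ) (ψ₁ z) * (-p z * ψ₂ z) := by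
    rw [wirtZbar_mul _ _ z (dcψ₁ z) (dφ₂ z), wirtZbar_conj _ _ (dψ₁ z), hd1, hd4]
  have ef₁ : f₁ = fun w => (1 / 2 : ℂ) *
      ((fun w => (starRingEnd ℂ) (ψ₁ w) * (starRingEnd ℂ) (ψ₂ w)) w -
        (fun w => φ₁ w * φ₂ w) w) := funext hf₁
  have ef₂ : f₂ = fun w => (Complex.I / 2) *
      ((fun w => (starRingEnd ℂ) (ψ₁ w) * (starRingEnd ℂ) (ψ₂ w)) w +
        (fun w => φ₁ w * φ₂ w) w) := funext hf₂
  have ef₃ : f₃ = fun w => (1 / 2 : ℂ) *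
      ((fun w => φ₁ w * (starRingEnd ℂ) (ψ₂ w)) w +
        (fun w => (starRingEnd ℂ) (ψ₁ w) * φ₂ w) w) := funext hf₃
  have ef₄ : f₄ = fun w => (Complex.I / 2) *
      ((fun w => (starRingEnd ℂ) (ψ₁ w) * φ₂ w) w -
        (fun w => φ₁ w * (starRingEnd ℂ) (ψ₂ w)) w) := funext hf₄
  have df₁ : DifferentiableAt ℝ f₁ z := by
    rw [ef₁]; exact (((dA z).sub (dB z)).const_mul _)
  have df₂ : DifferentiableAt ℝ f₂ z := by
    rw [ef₂]; exact (((dA z).add (dB z)).const_mul _)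
  have df₃ : DifferentiableAt ℝ f₃ z := by
    rw [ef₃]; exact (((dC z).add (dD z)).const_mul _)
  have df₄ : DifferentiableAt ℝ f₄ z := by
    rw [ef₄]; exact (((dD z).sub (dC z)).const_mul _)
  refine ⟨?_, ?_, ?_, ?_⟩
  · rw [wirtZ_conj _ _ df₁]
    conv_lhs => rw [ef₁]
    conv_rhs => rw [ef₁]
    rw [wirtZbar_const_mul _ _ z ((dA z).fun_sub (dB z)),
      wirtZbar_sub _ _ z (dA z) (dB z), wA, wB]
    simp only [map_mul, map_add, map_sub, map_neg, map_div₀, map_one, map_ofNat,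
      Complex.conj_conj]
    ring
  · rw [wirtZ_conj _ _ df₂]
    conv_lhs => rw [ef₂]
    conv_rhs => rw [ef₂]
    rw [wirtZbar_const_mul _ _ z ((dA z).fun_add (dB z)),
      wirtZbar_add _ _ z (dA z) (dB z), wA, wB]
    simp only [map_mul, map_add, map_sub, map_neg, map_div₀, map_one, map_ofNat,
      Complex.conj_conj, Complex.conj_I]
    ring
  · rw [wirtZ_conj _ _ df₃]
    conv_lhs => rw [ef₃]
    conv_rhs => rw [ef₃]
    rw [wirtZbar_const_mul _ _ z ((dC z).fun_add (dD z)),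
      wirtZbar_add _ _ z (dC z) (dD z), wC, wD]
    simp only [map_mul, map_add, map_sub, map_neg, map_div₀, map_one, map_ofNat,
      Complex.conj_conj]
    ring
  · rw [wirtZ_conj _ _ df₄]
    conv_lhs => rw [ef₄]
    conv_rhs => rw [ef₄]
    rw [wirtZbar_const_mul _ _ z ((dD z).fun_sub (dC z)),
      wirtZbar_sub _ _ z (dD z) (dC z), wD, wC]
    simp only [map_mul, map_add, map_sub, map_neg, map_div₀, map_one, map_ofNat,
      Complex.conj_conj, Complex.conj_I]
    ring
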